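/- arXiv:1907.09991 — 2 statements merged into one kernel-verified Lean document; each statement's English description precedes it below -/
import Mathlib

section
/- Let f : [a,b] → ℝ be 1-Lipschitz. For integers k ≥ 0 and 0 ≤ i < 2^k, let p_{i,k} = a + i·2^{-k}(b-a) and Q_{i,k} = [p_{i,k}, p_{i+1,k}]. Say f is ς-semilinear on an interval [u,v] if |f((u+v)/2) - (f(u)+f(v))/2| ≤ ς(v-u). If m ≥ 0 is an integer, ς > 0, and f is ς-semilinear on Q_{i,k} for all integers k ∈ [0,m] and i ∈ [0, 2^k - 1], then f is (2ς + 2^{-m})-linear on [a,b], meaning that the function f_{[a,b]}(x) = ((b-x)f(a) + (x-a)f(b))/(b-a) satisfies sup_{x∈[a,b]} |f(x) - f_{[a,b]}(x)| ≤ (2ς + 2^{-m})(b-a). -/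
/-!
Subtracting the linear interpolant `L` of `f` leaves `g = f - L`, which vanishes at `a` and `b`,
is still `ς`-semilinear on the dyadic intervals (`L` is affine) and is `2`-Lipschitz. Going from
level `k` to level `k + 1`, the new dyadic points are midpoints, where `|g|` can grow by at most
`ς (b - a) 2^{-k}`; summing, `|g| ≤ 2ς(b - a)(1 - 2^{-k})` at level `k ≤ m + 1`. Every point of
`[a, b]` lies within `(b - a) 2^{-m-1}` of a point of level `m + 1`, which costs the extra
`2 · 2^{-m-1} (b - a)`.
-/

open Set

/-- The dyadic point `p_{i,k} = a + i·2^{-k}(b-a)`. -/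
noncomputable def dyadicPt (a b : ℝ) (i k : ℕ) : ℝ := a + i * (b - a) / 2 ^ k

def IsSemilinearOn (f : ℝ → ℝ) (ς u v : ℝ) : Prop :=
  |f ((u + v) / 2) - (f u + f v) / 2| ≤ ς * (v - u)

lemma IsSemilinearOn.sub {f L : ℝ → ℝ} {ς u v : ℝ} (h : IsSemilinearOn f ς u v)
    (hL : L ((u + v) / 2) = (L u + L v) / 2) : IsSemilinearOn (fun x => f x - L x) ς u v := by
  unfold IsSemilinearOn at h ⊢
  convert h using 2
  simp only [hL]
  ring

lemma IsSemilinearOn.abs_midpoint_le {g : ℝ → ℝ} {ς u v E : ℝ} (h : IsSemilinearOn g ς u v)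
    (hu : |g u| ≤ E) (hv : |g v| ≤ E) : |g ((u + v) / 2)| ≤ E + ς * (v - u) := by
  have hmean : |(g u + g v) / 2| ≤ E := by
    rw [abs_div, abs_two]
    linarith [abs_add_le (g u) (g v)]
  calc |g ((u + v) / 2)|
      = |(g ((u + v) / 2) - (g u + g v) / 2) + (g u + g v) / 2| := by rw [sub_add_cancel]
    _ ≤ ς * (v - u) + E := (abs_add_le _ _).trans (add_le_add h hmean)
    _ = E + ς * (v - u) := add_comm _ _

section DyadicPt

variable {a b : ℝ}

@[simp] lemma dyadicPt_zero_left (k : ℕ) : dyadicPt a b 0 k = a := by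
  simp [dyadicPt]

@[simp] lemma dyadicPt_one_zero : dyadicPt a b 1 0 = b := by
  simp [dyadicPt]

lemma dyadicPt_two_mul_succ (i k : ℕ) : dyadicPt a b (2 * i) (k + 1) = dyadicPt a b i k := by
  simp only [dyadicPt]; push_cast; field_simp; ring

lemma dyadicPt_two_mul_add_one_succ (i k : ℕ) :
    dyadicPt a b (2 * i + 1) (k + 1) = (dyadicPt a b i k + dyadicPt a b (i + 1) k) / 2 := by
  simp only [dyadicPt]; push_cast; field_simp; ring

lemma dyadicPt_succ_sub (i k : ℕ) :
    dyadicPt a b (i + 1) k - dyadicPt a b i k = (b - a) / 2 ^ k := by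
  simp only [dyadicPt]; push_cast; ring

lemma dyadicPt_mem_Icc (hab : a ≤ b) {i k : ℕ} (hi : i ≤ 2 ^ k) : dyadicPt a b i k ∈ Icc a b := by
  have hik : (i : ℝ) / 2 ^ k ≤ 1 := div_le_one_of_le₀ (by exact_mod_cast hi) (by positivity)
  have hba : 0 ≤ b - a := sub_nonneg.2 hab
  have : i * (b - a) / 2 ^ k = (i / 2 ^ k) * (b - a) := by ring
  simp only [dyadicPt, mem_Icc, this]
  constructor <;> linarith [mul_nonneg (by positivity : (0 : ℝ) ≤ i / 2 ^ k) hba,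
    mul_le_of_le_one_left hba hik]

lemma exists_dyadicPt_near (hab : a < b) {x : ℝ} (hx : x ∈ Icc a b) (k : ℕ) :
    ∃ i ≤ 2 ^ k, |x - dyadicPt a b i k| ≤ (b - a) / 2 ^ k := by
  have hba : 0 < b - a := sub_pos.2 hab
  set t := (x - a) * 2 ^ k / (b - a) with ht
  have ht0 : 0 ≤ t := by have := hx.1; positivity
  have htk : t ≤ 2 ^ k := by
    rw [ht, div_le_iff₀ hba]; nlinarith [hx.2, pow_pos (two_pos (α := ℝ)) k]
  refine ⟨⌊t⌋₊, Nat.floor_le_of_le (by exact_mod_cast htk), ?_⟩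
  have hdist : x - dyadicPt a b ⌊t⌋₊ k = (t - ⌊t⌋₊) * ((b - a) / 2 ^ k) := by
    simp only [ht, dyadicPt]; field_simp; ring
  rw [hdist, abs_mul, abs_of_nonneg (by positivity : 0 ≤ (b - a) / 2 ^ k)]
  have h1 : |t - ⌊t⌋₊| ≤ 1 := abs_le.2 ⟨by linarith [Nat.floor_le ht0],
    by linarith [Nat.lt_floor_add_one t]⟩
  exact mul_le_of_le_one_left (by positivity) h1

end DyadicPt

lemma abs_dyadicPt_le_of_isSemilinearOn {a b ς : ℝ} {m : ℕ} {g : ℝ → ℝ} (hab : a ≤ b)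
    (hς : 0 ≤ ς) (ha : g a = 0) (hb : g b = 0)
    (hsemi : ∀ k ≤ m, ∀ i < 2 ^ k, IsSemilinearOn g ς (dyadicPt a b i k) (dyadicPt a b (i + 1) k)) :
    ∀ k ≤ m + 1, ∀ i ≤ 2 ^ k, |g (dyadicPt a b i k)| ≤ 2 * ς * (b - a) * (1 - (2 ^ k)⁻¹) := by
  intro k
  induction k with
  | zero =>
    intro _ i hi
    interval_cases i <;> simp [ha, hb]
  | succ k ih =>
    intro hk i hi
    have hpow : (2 : ℕ) ^ (k + 1) = 2 * 2 ^ k := by ring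
    have hE : 2 * ς * (b - a) * (1 - (2 ^ k)⁻¹) + ς * ((b - a) / 2 ^ k)
        = 2 * ς * (b - a) * (1 - (2 ^ (k + 1))⁻¹) := by
      field_simp; ring
    rcases Nat.even_or_odd' i with ⟨j, rfl | rfl⟩
    · rw [dyadicPt_two_mul_succ, ← hE]
      have := ih (by omega) j (by omega)
      have : 0 ≤ ς * ((b - a) / 2 ^ k) := mul_nonneg hς (div_nonneg (by linarith) (by positivity))
      linarith
    · rw [dyadicPt_two_mul_add_one_succ, ← hE, ← dyadicPt_succ_sub j k]
      exact (hsemi k (by omega) j (by omega)).abs_midpoint_le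
        (ih (by omega) j (by omega)) (ih (by omega) (j + 1) (by omega))

section LinInterp

variable (f : ℝ → ℝ) (a b : ℝ)

noncomputable def linInterp (x : ℝ) : ℝ := ((b - x) * f a + (x - a) * f b) / (b - a)

variable {a b}

@[simp] lemma linInterp_left (hab : a ≠ b) : linInterp f a b a = f a := by
  have : b - a ≠ 0 := sub_ne_zero.2 hab.symm
  simp only [linInterp]; field_simp; ring

@[simp] lemma linInterp_right (hab : a ≠ b) : linInterp f a b b = f b := by
  have : b - a ≠ 0 := sub_ne_zero.2 hab.symm
  simp only [linInterp]; field_simp; ring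

lemma linInterp_midpoint (u v : ℝ) :
    linInterp f a b ((u + v) / 2) = (linInterp f a b u + linInterp f a b v) / 2 := by
  simp only [linInterp]; ring

lemma linInterp_sub (x y : ℝ) :
    linInterp f a b x - linInterp f a b y = (x - y) * ((f b - f a) / (b - a)) := by
  simp only [linInterp]; ring

lemma lipschitzWith_one_linInterp (hab : a < b) (hf : |f b - f a| ≤ b - a) :
    LipschitzWith 1 (linInterp f a b) := by
  have hslope : |(f b - f a) / (b - a)| ≤ 1 := by
    rw [abs_div, abs_of_pos (sub_pos.2 hab)]
    exact div_le_one_of_le₀ hf (sub_pos.2 hab).le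
  refine LipschitzWith.mk_one fun x y => ?_
  rw [Real.dist_eq, Real.dist_eq, linInterp_sub, abs_mul]
  exact mul_le_of_le_one_right (abs_nonneg _) hslope

end LinInterp

/-- If a 1-Lipschitz function `f` on `[a,b]` is `ς`-semilinear on every dyadic interval
`Q_{i,k} = [p_{i,k}, p_{i+1,k}]` for all `0 ≤ k ≤ m` and `0 ≤ i < 2^k`, then `f` is
`(2ς + 2^{-m})`-linear on `[a,b]`. -/
theorem stmt0 (a b ς : ℝ) (m : ℕ) (hab : a < b) (hς : 0 < ς) (f : ℝ → ℝ)
    (hf : LipschitzOnWith 1 f (Set.Icc a b))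
    (hsemi : ∀ k : ℕ, k ≤ m → ∀ i : ℕ, i < 2 ^ k →
      |f ((dyadicPt a b i k + dyadicPt a b (i + 1) k) / 2) -
          (f (dyadicPt a b i k) + f (dyadicPt a b (i + 1) k)) / 2|
        ≤ ς * (dyadicPt a b (i + 1) k - dyadicPt a b i k)) :
    ∀ x ∈ Set.Icc a b,
      |f x - ((b - x) * f a + (x - a) * f b) / (b - a)|
        ≤ (2 * ς + ((2 : ℝ) ^ m)⁻¹) * (b - a) := by
  intro x hx
  set g := fun y => f y - linInterp f a b y
  have hfab : |f b - f a| ≤ b - a := by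
    simpa [Real.dist_eq, abs_of_pos (sub_pos.2 hab)] using
      hf.dist_le_mul b (right_mem_Icc.2 hab.le) a (left_mem_Icc.2 hab.le)
  have hg : LipschitzOnWith (1 + 1) g (Icc a b) :=
    hf.sub (lipschitzWith_one_linInterp f hab hfab).lipschitzOnWith
  obtain ⟨i, hi, hxp⟩ := exists_dyadicPt_near hab hx (m + 1)
  have hgp := abs_dyadicPt_le_of_isSemilinearOn (g := g) hab.le hς.le
    (by simp [g, hab.ne]) (by simp [g, hab.ne])
    (fun k hk i hi => IsSemilinearOn.sub (hsemi k hk i hi) (linInterp_midpoint f _ _))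
    (m + 1) le_rfl i hi
  have hgx : |g x - g (dyadicPt a b i (m + 1))| ≤ 2 * ((b - a) / 2 ^ (m + 1)) := by
    simpa [one_add_one_eq_two] using hg.norm_sub_le_of_le hx (dyadicPt_mem_Icc hab.le hi) hxp
  calc |g x| ≤ |g x - g (dyadicPt a b i (m + 1))| + |g (dyadicPt a b i (m + 1))| := by
        linarith [abs_sub_abs_le_abs_sub (g x) (g (dyadicPt a b i (m + 1)))]
    _ ≤ 2 * ((b - a) / 2 ^ (m + 1)) + 2 * ς * (b - a) * (1 - (2 ^ (m + 1))⁻¹) :=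
        add_le_add hgx hgp
    _ ≤ (2 * ς + ((2 : ℝ) ^ m)⁻¹) * (b - a) := by
        have : 0 ≤ 2 * ς * (b - a) * (2 ^ (m + 1))⁻¹ := by
          have := sub_pos.2 hab; positivity
        rw [pow_succ]; field_simp; nlinarith
end

section
/- Let a = (a_{-m}, ..., a_n) be a strictly increasing integer sequence with a₀ ≤ 0 < a₁, and suppose there is ε ∈ (0,1) such that for each integer j ∈ [B, n] one has a_j ∈ ((1+ε) j, ε^{-1} j) and for each j ∈ [-m, -B] one has a_j ∈ (ε^{-1} j, (1+ε) j), for some B ≥ 1. Then for any w ∈ ℂ with |w| ≤ 5B and dist(w, ℤ) ≥ 1/4, one has ∏_{j=-m}^{n} |w - a_j|^{-1} ≤ 16, i.e., the product of reciprocal distances from w to all points of the configuration within the specified structure is bounded by 16. -/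
/-! The points `a j` are distinct integers and every integer is at distance at least `1/4`
from `w`. Only the two integers `⌈Re w⌉ - 1` and `⌈Re w⌉` can lie within distance `1` of `w`,
so at most two factors `‖w - a j‖⁻¹` exceed `1`, and each of them is at most `4`. -/

open Finset

theorem Complex.mem_Icc_ceil_re_of_norm_sub_intCast_lt_one {w : ℂ} {k : ℤ}
    (hk : ‖w - k‖ < 1) : k ∈ Icc (⌈w.re⌉ - 1) ⌈w.re⌉ := by
  have hre : |w.re - k| < 1 := by
    simpa using (abs_re_le_norm (w - k)).trans_lt hk
  rw [abs_lt] at hre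
  have hlt : (k : ℝ) < ⌈w.re⌉ + 1 := by linarith [Int.le_ceil w.re]
  have hgt : (⌈w.re⌉ : ℝ) - 2 < k := by linarith [Int.ceil_lt_add_one w.re]
  have hlt' : k < ⌈w.re⌉ + 1 := by exact_mod_cast hlt
  have hgt' : ⌈w.re⌉ - 2 < k := by exact_mod_cast hgt
  exact mem_Icc.mpr ⟨by omega, by omega⟩

theorem card_filter_norm_sub_intCast_lt_one_le_two {ι : Type*} {s : Finset ι} {g : ι → ℤ}
    (hg : Set.InjOn g s) (w : ℂ) : #(s.filter fun i => ‖w - g i‖ < 1) ≤ 2 := by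
  have hsub : (s.filter fun i => ‖w - g i‖ < 1).image g ⊆ Icc (⌈w.re⌉ - 1) ⌈w.re⌉ := by
    rintro _ hk
    obtain ⟨i, hi, rfl⟩ := mem_image.mp hk
    exact Complex.mem_Icc_ceil_re_of_norm_sub_intCast_lt_one (mem_filter.mp hi).2
  calc #(s.filter fun i => ‖w - g i‖ < 1)
      = #((s.filter fun i => ‖w - g i‖ < 1).image g) :=
        (card_image_of_injOn (hg.mono (coe_subset.mpr (filter_subset _ s)))).symm
    _ ≤ #(Icc (⌈w.re⌉ - 1) ⌈w.re⌉) := card_le_card hsub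
    _ = 2 := by simp

theorem prod_inv_le_of_card_filter_lt_one_le {ι : Type*} {s : Finset ι} {f : ι → ℝ}
    {δ : ℝ} {N : ℕ} (hδ : 0 < δ) (hδ₁ : δ ≤ 1) (hf : ∀ i ∈ s, δ ≤ f i)
    (hN : #(s.filter (f · < 1)) ≤ N) : ∏ i ∈ s, (f i)⁻¹ ≤ δ⁻¹ ^ N := by
  have hf₀ : ∀ i ∈ s, 0 ≤ (f i)⁻¹ := fun i hi => inv_nonneg.mpr (hδ.le.trans (hf i hi))
  have hnear : ∏ i ∈ s.filter (f · < 1), (f i)⁻¹ ≤ δ⁻¹ ^ N :=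
    calc ∏ i ∈ s.filter (f · < 1), (f i)⁻¹
        ≤ ∏ _i ∈ s.filter (f · < 1), δ⁻¹ :=
          prod_le_prod (fun i hi => hf₀ i (mem_filter.mp hi).1)
            fun i hi => inv_anti₀ hδ (hf i (mem_filter.mp hi).1)
      _ = δ⁻¹ ^ #(s.filter (f · < 1)) := prod_const _
      _ ≤ δ⁻¹ ^ N := pow_le_pow_right₀ (one_le_inv₀ hδ |>.mpr hδ₁) hN
  have hfar : ∏ i ∈ s.filter (¬f · < 1), (f i)⁻¹ ≤ 1 :=
    prod_le_one (fun i hi => hf₀ i (mem_filter.mp hi).1)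
      fun i hi => inv_le_one_of_one_le₀ (not_lt.mp (mem_filter.mp hi).2)
  rw [← prod_filter_mul_prod_filter_not s (f · < 1)]
  simpa using mul_le_mul hnear hfar (prod_nonneg fun i hi => hf₀ i (mem_filter.mp hi).1)
    (by positivity)

theorem stmt18_general (m n : ℕ) (a : ℤ → ℤ)
    (hmono : StrictMonoOn a (Set.Icc (-(m : ℤ)) (n : ℤ)))
    (w : ℂ)
    (hdist : ∀ k : ℤ, (1 : ℝ) / 4 ≤ ‖w - (k : ℂ)‖) :
    ∏ j ∈ Finset.Icc (-(m : ℤ)) (n : ℤ), (‖w - ((a j : ℤ) : ℂ)‖)⁻¹ ≤ 16 := by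
  have hinj : Set.InjOn a (Icc (-(m : ℤ)) (n : ℤ)) := by
    simpa only [coe_Icc] using hmono.injOn
  calc ∏ j ∈ Icc (-(m : ℤ)) (n : ℤ), (‖w - ((a j : ℤ) : ℂ)‖)⁻¹
      ≤ (1 / 4 : ℝ)⁻¹ ^ 2 :=
        prod_inv_le_of_card_filter_lt_one_le (by norm_num) (by norm_num)
          (fun j _ => hdist (a j)) (card_filter_norm_sub_intCast_lt_one_le_two hinj w)
    _ = 16 := by norm_num

/-- For a strictly increasing integer configuration `a = (a_{-m},…,a_n)` with `a₀ ≤ 0 < a₁`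
growing at least linearly away from the origin, and any `w ∈ ℂ` with `|w| ≤ 5B` and
`dist(w, ℤ) ≥ 1/4`, the product of reciprocal distances `∏_j |w - a_j|⁻¹` is at most `16`. -/
theorem stmt18 (ε B : ℝ) (hε : ε ∈ Set.Ioo (0 : ℝ) 1) (hB : 1 ≤ B)
    (m n : ℕ) (hn : 1 ≤ n) (a : ℤ → ℤ)
    (hmono : StrictMonoOn a (Set.Icc (-(m : ℤ)) (n : ℤ)))
    (ha0 : a 0 ≤ 0) (ha1 : 0 < a 1)
    (hpos : ∀ j : ℤ, B ≤ (j : ℝ) → j ≤ (n : ℤ) →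
      (1 + ε) * (j : ℝ) < (a j : ℝ) ∧ (a j : ℝ) < ε⁻¹ * (j : ℝ))
    (hneg : ∀ j : ℤ, -(m : ℤ) ≤ j → (j : ℝ) ≤ -B →
      ε⁻¹ * (j : ℝ) < (a j : ℝ) ∧ (a j : ℝ) < (1 + ε) * (j : ℝ))
    (w : ℂ) (hw : ‖w‖ ≤ 5 * B)
    (hdist : ∀ k : ℤ, (1 : ℝ) / 4 ≤ ‖w - (k : ℂ)‖) :
    ∏ j ∈ Finset.Icc (-(m : ℤ)) (n : ℤ), (‖w - ((a j : ℤ) : ℂ)‖)⁻¹ ≤ 16 :=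
  stmt18_general m n a hmono w hdist
end
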